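/- arXiv:2010.13568 — 2 statements merged into one kernel-verified Lean document; each statement's English description precedes it below -/
import Mathlib

section
/- Suppose the penalty function g satisfies Assumption 3. Then for every λ > 0, the penalized problem min_θ f(θ) + λ g(θ) attains its infimum: there exists a CP parameter θ̂ with f(θ̂) + λ g(θ̂) = inf_θ {f(θ) + λ g(θ)}. -/
/-!
By (ii), every sublevel set of `g` has bounded magnitude, hence (as `f ≥ 0`, `λ > 0`) so does
the sublevel set `{F ≤ F 0}` of `F = f + λ g`. By (iii), each of its points can be replaced by a
parameter representing the same tensor (so with the same loss), with no larger penalty and with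
norm bounded uniformly: were no uniform bound possible, a sequence of worse and worse points would
contradict (iii). Hence the minimum of the continuous `F` over a compact ball is global.
-/

open scoped BigOperators
open Filter Matrix

noncomputable section

/-- The coefficient tensor `∑_{r<R} β_{1,r} ∘ ⋯ ∘ β_{D,r}` built from a CP parameter. -/
def cpDecomp {D : ℕ} {p : Fin D → ℕ} (R : ℕ) (β : Fin R → ∀ d : Fin D, Fin (p d) → ℝ) :
    (∀ d : Fin D, Fin (p d)) → ℝ :=
  fun i => ∑ r : Fin R, ∏ d : Fin D, β r d (i d)

/-- CP rank of an order-`D` tensor. -/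
def cpRank {D : ℕ} {p : Fin D → ℕ} (A : (∀ d : Fin D, Fin (p d)) → ℝ) : ℕ :=
  sInf {R : ℕ | ∃ β : Fin R → ∀ d : Fin D, Fin (p d) → ℝ, A = cpDecomp R β}

/-- Frobenius norm of a tensor. -/
def frob {D : ℕ} {p : Fin D → ℕ} (A : (∀ d : Fin D, Fin (p d)) → ℝ) : ℝ :=
  Real.sqrt (∑ i, (A i) ^ 2)

/-- The squared loss `f(θ) = ∑ᵢ (yᵢ − ⟨∑ᵣ β_{1,r}∘⋯∘β_{D,r}, Xᵢ⟩)²` of a CP parameter. -/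
def floss {D n : ℕ} {p : Fin D → ℕ} (R : ℕ) (y : Fin n → ℝ)
    (X : Fin n → (∀ d : Fin D, Fin (p d)) → ℝ)
    (θ : Fin R → ∀ d : Fin D, Fin (p d) → ℝ) : ℝ :=
  ∑ i, (y i - ∑ j, cpDecomp R θ j * X i j) ^ 2

/-- The magnitude `M(θ) = ∑ᵣ ∏_d ‖β_{d,r}‖` of a CP parameter. -/
def mag {D R : ℕ} {p : Fin D → ℕ} (θ : Fin R → ∀ d : Fin D, Fin (p d) → ℝ) : ℝ :=
  ∑ r : Fin R, ∏ d : Fin D, Real.sqrt (∑ l, θ r d l ^ 2)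

/-- The Euclidean norm `‖θ‖` of a CP parameter, viewed as one long vector. -/
def thetaNorm {D R : ℕ} {p : Fin D → ℕ} (θ : Fin R → ∀ d : Fin D, Fin (p d) → ℝ) : ℝ :=
  Real.sqrt (∑ r : Fin R, ∑ d : Fin D, ∑ l, θ r d l ^ 2)

section Coercivity

variable {α : Type*}

theorem exists_bound_of_le_of_tendsto_atTop {a b : α → ℝ}
    (h : ∀ u : ℕ → α, Tendsto (fun t => a (u t)) atTop atTop →
      Tendsto (fun t => b (u t)) atTop atTop)
    (C : ℝ) : ∃ S, ∀ x, b x ≤ C → a x ≤ S := by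
  by_contra! hunbdd
  choose u hub hua using fun t : ℕ => hunbdd t
  have ha : Tendsto (fun t => a (u t)) atTop atTop :=
    tendsto_atTop_mono (fun t => (hua t).le) tendsto_natCast_atTop_atTop
  obtain ⟨t, ht⟩ := ((h u ha).eventually_gt_atTop C).exists
  exact (hub t).not_gt ht

theorem exists_uniform_bound_of_forall_seq {S : Set α} {r : α → α → Prop} {ν : α → ℝ}
    (h : ∀ u : ℕ → α, (∀ t, u t ∈ S) → ∃ (v : ℕ → α) (c : ℝ), ∀ t, r (v t) (u t) ∧ ν (v t) ≤ c) :
    ∃ c, ∀ x ∈ S, ∃ x', r x' x ∧ ν x' ≤ c := by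
  by_contra! hunbdd
  choose u huS hu using fun t : ℕ => hunbdd t
  obtain ⟨v, c, hv⟩ := h u huS
  obtain ⟨t, ht⟩ := exists_nat_gt c
  exact (hu t (v t) (hv t).1).not_ge ((hv t).2.trans ht.le)

theorem exists_forall_le_of_dominated_by_compact [TopologicalSpace α] {F : α → ℝ}
    (hF : Continuous F) {K : Set α} (hK : IsCompact K) (x₀ : α)
    (hdom : ∀ x, F x ≤ F x₀ → ∃ x' ∈ K, F x' ≤ F x) : ∃ x, ∀ y, F x ≤ F y := by
  obtain ⟨x₀', hx₀'K, hx₀'⟩ := hdom x₀ le_rfl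
  obtain ⟨x, -, hxmin⟩ := hK.exists_isMinOn ⟨x₀', hx₀'K⟩ hF.continuousOn
  refine ⟨x, fun y => ?_⟩
  rcases le_or_gt (F y) (F x₀) with hy | hy
  · obtain ⟨y', hy'K, hy'⟩ := hdom y hy
    exact (hxmin hy'K).trans hy'
  · exact ((hxmin hx₀'K).trans hx₀').trans hy.le

end Coercivity

section CPParameter

variable {D : ℕ} {p : Fin D → ℕ} {R : ℕ}

theorem continuous_cpDecomp_apply (j : ∀ d : Fin D, Fin (p d)) :
    Continuous fun θ : Fin R → ∀ d : Fin D, Fin (p d) → ℝ => cpDecomp R θ j := by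
  unfold cpDecomp
  fun_prop

theorem continuous_floss {n : ℕ} (y : Fin n → ℝ) (X : Fin n → (∀ d : Fin D, Fin (p d)) → ℝ) :
    Continuous fun θ : Fin R → ∀ d : Fin D, Fin (p d) → ℝ => floss R y X θ := by
  unfold floss
  have := continuous_cpDecomp_apply (p := p) (R := R)
  fun_prop

theorem floss_nonneg {n : ℕ} (y : Fin n → ℝ) (X : Fin n → (∀ d : Fin D, Fin (p d)) → ℝ)
    (θ : Fin R → ∀ d : Fin D, Fin (p d) → ℝ) : 0 ≤ floss R y X θ :=
  Finset.sum_nonneg fun _ _ => sq_nonneg _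

theorem floss_congr {n : ℕ} (y : Fin n → ℝ) (X : Fin n → (∀ d : Fin D, Fin (p d)) → ℝ)
    {θ θ' : Fin R → ∀ d : Fin D, Fin (p d) → ℝ} (h : cpDecomp R θ = cpDecomp R θ') :
    floss R y X θ = floss R y X θ' := by
  unfold floss
  rw [h]

theorem abs_le_thetaNorm (θ : Fin R → ∀ d : Fin D, Fin (p d) → ℝ) (r : Fin R) (d : Fin D)
    (l : Fin (p d)) : |θ r d l| ≤ thetaNorm θ := by
  rw [thetaNorm, ← Real.sqrt_sq_eq_abs]
  gcongr
  calc θ r d l ^ 2 ≤ ∑ l', θ r d l' ^ 2 :=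
        Finset.single_le_sum (fun _ _ => sq_nonneg _) (Finset.mem_univ l)
    _ ≤ ∑ d', ∑ l', θ r d' l' ^ 2 :=
        Finset.single_le_sum (f := fun d' => ∑ l', θ r d' l' ^ 2)
          (fun _ _ => by positivity) (Finset.mem_univ d)
    _ ≤ ∑ r', ∑ d', ∑ l', θ r' d' l' ^ 2 :=
        Finset.single_le_sum (f := fun r' => ∑ d', ∑ l', θ r' d' l' ^ 2)
          (fun _ _ => by positivity) (Finset.mem_univ r)

-- `‖θ‖` is the sup norm of the product type, not the Euclidean norm `thetaNorm θ`.
theorem norm_le_thetaNorm (θ : Fin R → ∀ d : Fin D, Fin (p d) → ℝ) : ‖θ‖ ≤ thetaNorm θ := by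
  have h0 : 0 ≤ thetaNorm θ := Real.sqrt_nonneg _
  refine (pi_norm_le_iff_of_nonneg h0).2 fun r => (pi_norm_le_iff_of_nonneg h0).2 fun d =>
    (pi_norm_le_iff_of_nonneg h0).2 fun l => ?_
  rw [Real.norm_eq_abs]
  exact abs_le_thetaNorm θ r d l

end CPParameter

theorem stmt9_general {D n R : ℕ} {p : Fin D → ℕ}
    (y : Fin n → ℝ) (X : Fin n → (∀ d : Fin D, Fin (p d)) → ℝ)
    (g : (Fin R → ∀ d : Fin D, Fin (p d) → ℝ) → ℝ)
    -- Assumption 3: g continuous, with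
    (hg_cont : Continuous g)
    -- (ii) g(θ_t) → ∞ whenever M(θ_t) → ∞
    (hg2 : ∀ θseq : ℕ → Fin R → ∀ d : Fin D, Fin (p d) → ℝ,
      Tendsto (fun t => mag (θseq t)) atTop atTop →
      Tendsto (fun t => g (θseq t)) atTop atTop)
    -- (iii) bounded-magnitude sequences can be re-represented boundedly without
    -- increasing the penalty
    (hg3 : ∀ (S₁ : ℝ) (θseq : ℕ → Fin R → ∀ d : Fin D, Fin (p d) → ℝ),
      (∀ t, mag (θseq t) ≤ S₁) →
      ∃ (θseq' : ℕ → Fin R → ∀ d : Fin D, Fin (p d) → ℝ) (S₂ : ℝ), ∀ t,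
        cpDecomp R (θseq' t) = cpDecomp R (θseq t) ∧ mag (θseq' t) ≤ S₁ ∧
        g (θseq' t) ≤ g (θseq t) ∧ thetaNorm (θseq' t) ≤ S₂)
    (lam : ℝ) (hlam : 0 < lam) :
    ∃ θhat : Fin R → ∀ d : Fin D, Fin (p d) → ℝ,
      ∀ θ : Fin R → ∀ d : Fin D, Fin (p d) → ℝ,
        floss R y X θhat + lam * g θhat ≤ floss R y X θ + lam * g θ := by
  set F := fun θ => floss R y X θ + lam * g θ
  have hgF : ∀ θ, g θ ≤ F θ / lam := fun θ => by
    rw [le_div_iff₀ hlam, mul_comm]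
    exact le_add_of_nonneg_left (floss_nonneg y X θ)
  obtain ⟨c, hc⟩ : ∃ c : ℝ, ∀ θ ∈ {θ | F θ ≤ F 0}, ∃ θ', F θ' ≤ F θ ∧ thetaNorm θ' ≤ c := by
    refine exists_uniform_bound_of_forall_seq fun θseq hθseq => ?_
    obtain ⟨S₁, hS₁⟩ := exists_bound_of_le_of_tendsto_atTop hg2 (F 0 / lam)
    obtain ⟨θseq', S₂, hθseq'⟩ :=
      hg3 S₁ θseq fun t => hS₁ _ ((hgF _).trans (by gcongr; exact hθseq t))
    refine ⟨θseq', S₂, fun t => ⟨?_, (hθseq' t).2.2.2⟩⟩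
    obtain ⟨hcp, -, hg, -⟩ := hθseq' t
    simp only [F, floss_congr y X hcp]
    gcongr
  refine exists_forall_le_of_dominated_by_compact
    ((continuous_floss y X).add (continuous_const.mul hg_cont)) (isCompact_closedBall 0 c) 0
    fun θ hθ => ?_
  obtain ⟨θ', hθ'F, hθ'c⟩ := hc θ hθ
  exact ⟨θ', mem_closedBall_zero_iff.2 ((norm_le_thetaNorm θ').trans hθ'c), hθ'F⟩

/-- if the penalty `g` satisfies Assumption 3, then for every `λ > 0` the
penalized problem `min_θ f(θ) + λ g(θ)` attains its infimum. -/
theorem stmt9 {D n R : ℕ} {p : Fin D → ℕ} (hR : 1 ≤ R)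
    (y : Fin n → ℝ) (X : Fin n → (∀ d : Fin D, Fin (p d)) → ℝ)
    (g : (Fin R → ∀ d : Fin D, Fin (p d) → ℝ) → ℝ)
    -- Assumption 3: g continuous, with
    (hg_cont : Continuous g)
    -- (i) g(0) < ∞ (trivial for real-valued g)
    (hg1 : ∃ c : ℝ, g 0 ≤ c)
    -- (ii) g(θ_t) → ∞ whenever M(θ_t) → ∞
    (hg2 : ∀ θseq : ℕ → Fin R → ∀ d : Fin D, Fin (p d) → ℝ,
      Tendsto (fun t => mag (θseq t)) atTop atTop →
      Tendsto (fun t => g (θseq t)) atTop atTop)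
    -- (iii) bounded-magnitude sequences can be re-represented boundedly without
    -- increasing the penalty
    (hg3 : ∀ (S₁ : ℝ) (θseq : ℕ → Fin R → ∀ d : Fin D, Fin (p d) → ℝ),
      (∀ t, mag (θseq t) ≤ S₁) →
      ∃ (θseq' : ℕ → Fin R → ∀ d : Fin D, Fin (p d) → ℝ) (S₂ : ℝ), ∀ t,
        cpDecomp R (θseq' t) = cpDecomp R (θseq t) ∧ mag (θseq' t) ≤ S₁ ∧
        g (θseq' t) ≤ g (θseq t) ∧ thetaNorm (θseq' t) ≤ S₂)
    (lam : ℝ) (hlam : 0 < lam) :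
    ∃ θhat : Fin R → ∀ d : Fin D, Fin (p d) → ℝ,
      ∀ θ : Fin R → ∀ d : Fin D, Fin (p d) → ℝ,
        floss R y X θhat + lam * g θhat ≤ floss R y X θ + lam * g θ :=
  stmt9_general y X g hg_cont hg2 hg3 lam hlam
end
end

section
/- Let D = 3 and suppose the design matrix Z ∈ ℝ^{n×p₁p₂p₃} has orthonormal columns (ZᵀZ = I) and y = Z vec(G_b), where G_b = v₁ ∘ w₂ ∘ w₃ + w₁ ∘ v₂ ∘ w₃ + w₁ ∘ w₂ ∘ v₃ with w_d, v_d ∈ ℝ^{p_d} a linearly independent pair for each d = 1,2,3. Then for every α > 0, the coefficient-penalized rank-constrained problem inf{‖y − Z vec(A)‖² + α‖A‖_F² : rank(A) ≤ 2} does not attain its infimum (it has no solution). In particular, imposing the ridge penalty on the coefficient tensor does not guarantee existence of a solution. -/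
open scoped BigOperators
open Matrix

noncomputable section

/-- Outer product of three vectors, as an order-3 tensor. -/
def outer3 {p₁ p₂ p₃ : ℕ} (u : Fin p₁ → ℝ) (v : Fin p₂ → ℝ) (w : Fin p₃ → ℝ) :
    Fin p₁ × Fin p₂ × Fin p₃ → ℝ :=
  fun i => u i.1 * v i.2.1 * w i.2.2

/-- CP rank of an order-3 tensor: the least `R` such that the tensor is a sum of `R`
outer products. -/
def rank3 {p₁ p₂ p₃ : ℕ} (A : Fin p₁ × Fin p₂ × Fin p₃ → ℝ) : ℕ :=
  sInf {R : ℕ | ∃ (a : Fin R → Fin p₁ → ℝ) (b : Fin R → Fin p₂ → ℝ) (c : Fin R → Fin p₃ → ℝ),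
    A = fun i => ∑ r, a r i.1 * b r i.2.1 * c r i.2.2}

/-!
Since `ZᵀZ = 1`, the ridge objective of `A` equals `(1 + α) ‖A - G / (1 + α)‖² + const`, so a
minimiser over the tensors of rank `≤ 2` is a best rank-`≤ 2` approximation of `G / (1 + α)`.
But `G` is the derivative at `t = 0` of `t ↦ (w₁ + t v₁)∘(w₂ + t v₂)∘(w₃ + t v₃)`, hence a limit
of difference quotients of rank `≤ 2`, so that minimiser would be `G / (1 + α)` itself.
This contradicts `rank G = 3`: contracting the first mode of `G = a₀∘b₀∘c₀ + a₁∘b₁∘c₁` with a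
functional killing `a₀` leaves a rank-one matrix on the right and `v₂ w₃ᵀ + w₂ (v₃ + s w₃)ᵀ`, of
rank two, on the left; if `a₀` and `a₁` are both multiples of `w₁`, a functional killing `w₁`
leaves `0` on the right and `w₂ w₃ᵀ ≠ 0` on the left.
-/

lemma LinearIndependent.exists_dual_eq_one_eq_zero {K V : Type*} [Field K] [AddCommGroup V]
    [Module K V] {x y : V} (h : LinearIndependent K ![x, y]) :
    ∃ f : Module.Dual K V, f x = 1 ∧ f y = 0 := by
  have hx : x ∉ K ∙ y := by
    rw [Submodule.mem_span_singleton]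
    exact fun ⟨a, ha⟩ => (linearIndependent_fin2.mp h).2 a ha
  obtain ⟨f, hfx, hf⟩ := Submodule.exists_dual_map_eq_bot_of_notMem hx inferInstance
  have hfy : f y = 0 := by
    simpa [hf] using Submodule.mem_map_of_mem (f := f) (Submodule.mem_span_singleton_self y)
  exact ⟨(f x)⁻¹ • f, by simp [hfx], by simp [hfy]⟩

lemma vecMulVec_add_vecMulVec_ne_vecMulVec {K m n : Type*} [Field K] {x x' : m → K}
    {y y' : n → K} (hx : LinearIndependent K ![x, x']) (hy : LinearIndependent K ![y, y'])
    (b : m → K) (c : n → K) : vecMulVec x y + vecMulVec x' y' ≠ vecMulVec b c := by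
  intro h
  have hrow (f : Module.Dual K (n → K)) : f y • x + f y' • x' = f c • b := by
    ext j
    have hrowj (u : m → K) (v : n → K) : vecMulVec u v j = u j • v := by
      ext; simp [vecMulVec_apply]
    have := congrArg (fun M : Matrix m n K => f (M j)) h
    rw [show (vecMulVec x y + vecMulVec x' y') j = vecMulVec x y j + vecMulVec x' y' j from rfl,
      hrowj, hrowj, hrowj] at this
    simpa [mul_comm] using this
  obtain ⟨f, hfy, hfy'⟩ := hy.exists_dual_eq_one_eq_zero
  obtain ⟨g, hgy', hgy⟩ := (LinearIndependent.pair_symm_iff.mp hy).exists_dual_eq_one_eq_zero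
  have hxb : x = f c • b := by simpa [hfy, hfy'] using hrow f
  have hx'b : x' = g c • b := by simpa [hgy, hgy'] using hrow g
  obtain ⟨-, hfc⟩ := LinearIndependent.pair_iff.mp hx (g c) (-f c) (by rw [hxb, hx'b]; module)
  exact hx.ne_zero 0 (by simpa [neg_eq_zero.mp hfc] using hxb)

section RidgeObjective

variable {ι m : Type*} [Fintype ι] [Fintype m]

lemma sum_sq_mulVec_of_transpose_mul_self [DecidableEq ι] {Z : Matrix m ι ℝ} (hZ : Zᵀ * Z = 1)
    (x : ι → ℝ) :
    ∑ i, (Z *ᵥ x) i ^ 2 = ∑ j, x j ^ 2 := by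
  have h : Z *ᵥ x ⬝ᵥ Z *ᵥ x = x ⬝ᵥ x := by
    rw [dotProduct_mulVec, ← mulVec_transpose, mulVec_mulVec, hZ, one_mulVec]
  simpa [dotProduct, sq] using h

lemma sum_sq_sub_mulVec_add_mul_sum_sq [DecidableEq ι] {Z : Matrix m ι ℝ} (hZ : Zᵀ * Z = 1)
    {α : ℝ} (hα : 1 + α ≠ 0) (G B : ι → ℝ) :
    ∑ i, ((Z *ᵥ G) i - (Z *ᵥ B) i) ^ 2 + α * ∑ j, B j ^ 2 =
      (1 + α) * ∑ j, (B j - ((1 + α)⁻¹ • G) j) ^ 2 + α / (1 + α) * ∑ j, G j ^ 2 := by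
  have hres : ∑ i, ((Z *ᵥ G) i - (Z *ᵥ B) i) ^ 2 = ∑ j, (G j - B j) ^ 2 := by
    simpa [mulVec_sub] using sum_sq_mulVec_of_transpose_mul_self hZ (G - B)
  rw [hres, Finset.mul_sum, Finset.mul_sum, Finset.mul_sum, ← Finset.sum_add_distrib,
    ← Finset.sum_add_distrib]
  refine Finset.sum_congr rfl fun j _ => ?_
  simp only [Pi.smul_apply, smul_eq_mul]
  field_simp
  ring

lemma eq_of_isMinOn_of_mem_closure {S : Set (ι → ℝ)} {A T : ι → ℝ}
    (hA : IsMinOn (fun B => ∑ j, (B j - T j) ^ 2) S A) (hT : T ∈ closure S) : A = T := by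
  have hAT := isMinOn_iff.mp (hA.closure (by fun_prop)) T hT
  simp only [sub_self, zero_pow two_ne_zero, Finset.sum_const_zero] at hAT
  have hzero := (Finset.sum_eq_zero_iff_of_nonneg fun j _ => sq_nonneg (A j - T j)).mp
    (le_antisymm hAT (Finset.sum_nonneg fun j _ => sq_nonneg _))
  funext j
  simpa [sub_eq_zero] using hzero j (Finset.mem_univ j)

end RidgeObjective

section Rank

variable {p₁ p₂ p₃ : ℕ}

@[simp]
lemma outer3_apply (a : Fin p₁ → ℝ) (b : Fin p₂ → ℝ) (c : Fin p₃ → ℝ)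
    (i : Fin p₁ × Fin p₂ × Fin p₃) :
    outer3 a b c i = a i.1 * b i.2.1 * c i.2.2 := rfl

@[simp]
lemma outer3_zero_left (b : Fin p₂ → ℝ) (c : Fin p₃ → ℝ) : outer3 (0 : Fin p₁ → ℝ) b c = 0 := by
  ext; simp

lemma outer3_smul_left (s : ℝ) (a : Fin p₁ → ℝ) (b : Fin p₂ → ℝ) (c : Fin p₃ → ℝ) :
    outer3 (s • a) b c = s • outer3 a b c := by
  ext; simp [mul_assoc]

lemma rank3_eq_sInf (A : Fin p₁ × Fin p₂ × Fin p₃ → ℝ) :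
    rank3 A = sInf {R | ∃ (a : Fin R → Fin p₁ → ℝ) (b : Fin R → Fin p₂ → ℝ)
      (c : Fin R → Fin p₃ → ℝ), A = ∑ r, outer3 (a r) (b r) (c r)} := by
  have (R : ℕ) (a : Fin R → Fin p₁ → ℝ) (b : Fin R → Fin p₂ → ℝ) (c : Fin R → Fin p₃ → ℝ) :
      ∑ r, outer3 (a r) (b r) (c r) = fun i => ∑ r, a r i.1 * b r i.2.1 * c r i.2.2 := by
    ext; simp [Finset.sum_apply]
  simp only [rank3, this]

lemma exists_sum_outer3 (A : Fin p₁ × Fin p₂ × Fin p₃ → ℝ) :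
    ∃ (a : Fin (p₁ * p₂ * p₃) → Fin p₁ → ℝ) (b : Fin (p₁ * p₂ * p₃) → Fin p₂ → ℝ)
      (c : Fin (p₁ * p₂ * p₃) → Fin p₃ → ℝ), A = ∑ r, outer3 (a r) (b r) (c r) := by
  classical
  have hcard : Fintype.card (Fin p₁ × Fin p₂ × Fin p₃) = p₁ * p₂ * p₃ := by simp [mul_assoc]
  let e := (Fintype.equivFinOfCardEq hcard).symm
  refine ⟨fun r => Pi.single (e r).1 (A (e r)), fun r => Pi.single (e r).2.1 1,
    fun r => Pi.single (e r).2.2 1, ?_⟩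
  rw [Equiv.sum_comp e fun t =>
    outer3 (Pi.single t.1 (A t)) (Pi.single t.2.1 1) (Pi.single t.2.2 1)]
  ext i
  have hcond (t : Fin p₁ × Fin p₂ × Fin p₃) :
      (i.2.2 = t.2.2 ∧ i.2.1 = t.2.1 ∧ i.1 = t.1) ↔ i = t := by
    simp only [Prod.ext_iff]; tauto
  simp [Finset.sum_apply, Pi.single_apply, ← ite_and, hcond]

lemma exists_sum_outer3_of_le {A : Fin p₁ × Fin p₂ × Fin p₃ → ℝ} {R R' : ℕ} (hRR' : R ≤ R')
    (hA : ∃ (a : Fin R → Fin p₁ → ℝ) (b : Fin R → Fin p₂ → ℝ) (c : Fin R → Fin p₃ → ℝ),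
      A = ∑ r, outer3 (a r) (b r) (c r)) :
    ∃ (a : Fin R' → Fin p₁ → ℝ) (b : Fin R' → Fin p₂ → ℝ) (c : Fin R' → Fin p₃ → ℝ),
      A = ∑ r, outer3 (a r) (b r) (c r) := by
  induction hRR' with
  | refl => exact hA
  | step _ ih =>
    obtain ⟨a, b, c, rfl⟩ := ih
    exact ⟨Fin.cons 0 a, Fin.cons 0 b, Fin.cons 0 c, by simp [Fin.sum_univ_succ]⟩

lemma rank3_le_iff {A : Fin p₁ × Fin p₂ × Fin p₃ → ℝ} {R : ℕ} :
    rank3 A ≤ R ↔ ∃ (a : Fin R → Fin p₁ → ℝ) (b : Fin R → Fin p₂ → ℝ) (c : Fin R → Fin p₃ → ℝ),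
      A = ∑ r, outer3 (a r) (b r) (c r) := by
  have hmem := rank3_eq_sInf A ▸ Nat.sInf_mem ⟨_, exists_sum_outer3 A⟩
  exact ⟨fun h => exists_sum_outer3_of_le h hmem, fun h => rank3_eq_sInf A ▸ Nat.sInf_le h⟩

lemma rank3_le_two_iff {A : Fin p₁ × Fin p₂ × Fin p₃ → ℝ} :
    rank3 A ≤ 2 ↔ ∃ (a₀ a₁ : Fin p₁ → ℝ) (b₀ b₁ : Fin p₂ → ℝ) (c₀ c₁ : Fin p₃ → ℝ),
      A = outer3 a₀ b₀ c₀ + outer3 a₁ b₁ c₁ := by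
  rw [rank3_le_iff]
  constructor
  · rintro ⟨a, b, c, rfl⟩
    exact ⟨a 0, a 1, b 0, b 1, c 0, c 1, Fin.sum_univ_two _⟩
  · rintro ⟨a₀, a₁, b₀, b₁, c₀, c₁, rfl⟩
    exact ⟨![a₀, a₁], ![b₀, b₁], ![c₀, c₁], by simp [Fin.sum_univ_two]⟩

lemma rank3_smul_le (s : ℝ) (A : Fin p₁ × Fin p₂ × Fin p₃ → ℝ) : rank3 (s • A) ≤ rank3 A := by
  obtain ⟨a, b, c, hA⟩ := rank3_le_iff.mp (le_refl (rank3 A))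
  exact rank3_le_iff.mpr ⟨fun r => s • a r, b, c, by simp [hA, Finset.smul_sum, outer3_smul_left]⟩

lemma rank3_smul {s : ℝ} (hs : s ≠ 0) (A : Fin p₁ × Fin p₂ × Fin p₃ → ℝ) :
    rank3 (s • A) = rank3 A := by
  refine le_antisymm (rank3_smul_le s A) ?_
  simpa [smul_smul, hs] using rank3_smul_le s⁻¹ (s • A)

end Rank

section Degenerate

variable {p₁ p₂ p₃ : ℕ}

def contractFirst (f : Module.Dual ℝ (Fin p₁ → ℝ)) (A : Fin p₁ × Fin p₂ × Fin p₃ → ℝ) :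
    Matrix (Fin p₂) (Fin p₃) ℝ :=
  Matrix.of fun j k => f fun i => A (i, j, k)

lemma contractFirst_add (f : Module.Dual ℝ (Fin p₁ → ℝ)) (A B : Fin p₁ × Fin p₂ × Fin p₃ → ℝ) :
    contractFirst f (A + B) = contractFirst f A + contractFirst f B := by
  ext j k
  exact map_add f (fun i => A (i, j, k)) (fun i => B (i, j, k))

lemma contractFirst_outer3 (f : Module.Dual ℝ (Fin p₁ → ℝ)) (a : Fin p₁ → ℝ) (b : Fin p₂ → ℝ)
    (c : Fin p₃ → ℝ) : contractFirst f (outer3 a b c) = f a • vecMulVec b c := by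
  ext j k
  have : (fun i => outer3 a b c (i, j, k)) = (b j * c k) • a := by ext; simp; ring
  simp only [contractFirst, of_apply, this, map_smul, smul_eq_mul, Matrix.smul_apply,
    vecMulVec_apply]
  ring

def degenerateTensor (w₁ v₁ : Fin p₁ → ℝ) (w₂ v₂ : Fin p₂ → ℝ) (w₃ v₃ : Fin p₃ → ℝ) :
    Fin p₁ × Fin p₂ × Fin p₃ → ℝ :=
  outer3 v₁ w₂ w₃ + outer3 w₁ v₂ w₃ + outer3 w₁ w₂ v₃

variable {w₁ v₁ : Fin p₁ → ℝ} {w₂ v₂ : Fin p₂ → ℝ} {w₃ v₃ : Fin p₃ → ℝ}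

lemma contractFirst_degenerateTensor (f : Module.Dual ℝ (Fin p₁ → ℝ)) :
    contractFirst f (degenerateTensor w₁ v₁ w₂ v₂ w₃ v₃) =
      f v₁ • vecMulVec w₂ w₃ + f w₁ • (vecMulVec v₂ w₃ + vecMulVec w₂ v₃) := by
  simp only [degenerateTensor, contractFirst_add, contractFirst_outer3, smul_add, add_assoc]

lemma degenerateTensor_ne_of_linearIndependent (h₂ : LinearIndependent ℝ ![w₂, v₂])
    (h₃ : LinearIndependent ℝ ![w₃, v₃]) {a₀ a₁ : Fin p₁ → ℝ}
    (ha₀ : LinearIndependent ℝ ![w₁, a₀]) (b₀ b₁ : Fin p₂ → ℝ) (c₀ c₁ : Fin p₃ → ℝ) :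
    degenerateTensor w₁ v₁ w₂ v₂ w₃ v₃ ≠ outer3 a₀ b₀ c₀ + outer3 a₁ b₁ c₁ := by
  intro h
  obtain ⟨f, hfw, hfa⟩ := ha₀.exists_dual_eq_one_eq_zero
  have hslice := congrArg (contractFirst f) h
  rw [contractFirst_degenerateTensor, contractFirst_add, contractFirst_outer3,
    contractFirst_outer3, hfw, hfa, zero_smul, zero_add, one_smul] at hslice
  have hw₃ : LinearIndependent ℝ ![w₃, f v₁ • w₃ + v₃] :=
    (LinearIndependent.pair_add_smul_right_iff (f v₁)).mpr h₃
  have h₂' : LinearIndependent ℝ ![v₂, w₂] := LinearIndependent.pair_symm_iff.mp h₂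
  refine vecMulVec_add_vecMulVec_ne_vecMulVec h₂' hw₃ (f a₁ • b₁) c₁ ?_
  rw [smul_vecMulVec, ← hslice, vecMulVec_add, vecMulVec_smul]
  exact add_left_comm _ _ _

lemma degenerateTensor_ne_outer3_add_outer3 (h₁ : LinearIndependent ℝ ![w₁, v₁])
    (h₂ : LinearIndependent ℝ ![w₂, v₂]) (h₃ : LinearIndependent ℝ ![w₃, v₃])
    (a₀ a₁ : Fin p₁ → ℝ) (b₀ b₁ : Fin p₂ → ℝ) (c₀ c₁ : Fin p₃ → ℝ) :
    degenerateTensor w₁ v₁ w₂ v₂ w₃ v₃ ≠ outer3 a₀ b₀ c₀ + outer3 a₁ b₁ c₁ := by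
  by_cases ha₀ : LinearIndependent ℝ ![w₁, a₀]
  · exact degenerateTensor_ne_of_linearIndependent h₂ h₃ ha₀ b₀ b₁ c₀ c₁
  by_cases ha₁ : LinearIndependent ℝ ![w₁, a₁]
  · rw [add_comm]
    exact degenerateTensor_ne_of_linearIndependent h₂ h₃ ha₁ b₁ b₀ c₁ c₀
  have hw₁ : w₁ ≠ 0 := by simpa using h₁.ne_zero 0
  have hmul {a : Fin p₁ → ℝ} (ha : ¬LinearIndependent ℝ ![w₁, a]) : ∃ s : ℝ, s • w₁ = a := by
    rw [LinearIndependent.pair_symm_iff, linearIndependent_fin2] at ha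
    simpa [hw₁] using ha
  obtain ⟨s₀, rfl⟩ := hmul ha₀
  obtain ⟨s₁, rfl⟩ := hmul ha₁
  intro h
  obtain ⟨f, hfv, hfw⟩ := (LinearIndependent.pair_symm_iff.mp h₁).exists_dual_eq_one_eq_zero
  have hslice := congrArg (contractFirst f) h
  simp only [contractFirst_degenerateTensor, contractFirst_add, contractFirst_outer3, map_smul,
    hfv, hfw, smul_zero, zero_smul, one_smul, add_zero] at hslice
  obtain ⟨j, hj⟩ := Function.ne_iff.mp (by simpa using h₂.ne_zero 0 : w₂ ≠ 0)
  obtain ⟨k, hk⟩ := Function.ne_iff.mp (by simpa using h₃.ne_zero 0 : w₃ ≠ 0)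
  rcases mul_eq_zero.mp (congr_fun₂ hslice j k) with hj' | hk'
  exacts [hj hj', hk hk']

lemma two_lt_rank3_degenerateTensor (h₁ : LinearIndependent ℝ ![w₁, v₁])
    (h₂ : LinearIndependent ℝ ![w₂, v₂]) (h₃ : LinearIndependent ℝ ![w₃, v₃]) :
    2 < rank3 (degenerateTensor w₁ v₁ w₂ v₂ w₃ v₃) := by
  by_contra! h
  obtain ⟨a₀, a₁, b₀, b₁, c₀, c₁, hG⟩ := rank3_le_two_iff.mp h
  exact degenerateTensor_ne_outer3_add_outer3 h₁ h₂ h₃ a₀ a₁ b₀ b₁ c₀ c₁ hG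

open Filter Topology in
lemma degenerateTensor_mem_closure (w₁ v₁ : Fin p₁ → ℝ) (w₂ v₂ : Fin p₂ → ℝ)
    (w₃ v₃ : Fin p₃ → ℝ) :
    degenerateTensor w₁ v₁ w₂ v₂ w₃ v₃ ∈ closure {B | rank3 B ≤ 2} := by
  set G := degenerateTensor w₁ v₁ w₂ v₂ w₃ v₃
  set E₂ := outer3 v₁ v₂ w₃ + outer3 v₁ w₂ v₃ + outer3 w₁ v₂ v₃
  set E₃ := outer3 v₁ v₂ v₃
  have hlim : Tendsto (fun t : ℝ => G + t • E₂ + t ^ 2 • E₃) (𝓝[≠] 0) (𝓝 G) := by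
    have hcont : Continuous fun t : ℝ => G + t • E₂ + t ^ 2 • E₃ := by fun_prop
    simpa using (hcont.tendsto 0).mono_left nhdsWithin_le_nhds
  refine mem_closure_of_tendsto hlim (eventually_nhdsWithin_of_forall fun t (ht : t ≠ 0) => ?_)
  refine rank3_le_two_iff.mpr
    ⟨t⁻¹ • (w₁ + t • v₁), -t⁻¹ • w₁, w₂ + t • v₂, w₂, w₃ + t • v₃, w₃, ?_⟩
  ext i
  simp only [G, E₂, E₃, degenerateTensor, Pi.add_apply, Pi.smul_apply, outer3_apply, smul_eq_mul]
  field_simp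
  ring

end Degenerate

/-- with an orthonormal-column design (`ZᵀZ = I`) and responses
`y = Z vec(G_b)` for the degenerate tensor `G_b = v₁∘w₂∘w₃ + w₁∘v₂∘w₃ + w₁∘w₂∘v₃`,
for every `α > 0` the ridge-penalized (on the coefficient tensor) rank-2-constrained
problem `inf{‖y − Z vec(A)‖² + α‖A‖_F² : rank(A) ≤ 2}` has no solution. -/
theorem stmt12 {n p₁ p₂ p₃ : ℕ}
    (Z : Matrix (Fin n) (Fin p₁ × Fin p₂ × Fin p₃) ℝ)
    (hZ : Zᵀ * Z = 1)
    (w₁ v₁ : Fin p₁ → ℝ) (w₂ v₂ : Fin p₂ → ℝ) (w₃ v₃ : Fin p₃ → ℝ)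
    (h₁ : LinearIndependent ℝ ![w₁, v₁])
    (h₂ : LinearIndependent ℝ ![w₂, v₂])
    (h₃ : LinearIndependent ℝ ![w₃, v₃])
    (y : Fin n → ℝ)
    (hy : y = Z.mulVec (outer3 v₁ w₂ w₃ + outer3 w₁ v₂ w₃ + outer3 w₁ w₂ v₃)) :
    ∀ α : ℝ, 0 < α →
      ¬ ∃ A : Fin p₁ × Fin p₂ × Fin p₃ → ℝ, rank3 A ≤ 2 ∧
        ∀ B : Fin p₁ × Fin p₂ × Fin p₃ → ℝ, rank3 B ≤ 2 →
          (∑ i, (y i - Z.mulVec A i) ^ 2) + α * ∑ j, A j ^ 2 ≤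
            (∑ i, (y i - Z.mulVec B i) ^ 2) + α * ∑ j, B j ^ 2 := by
  rintro α hα ⟨A, hA, hmin⟩
  set G := degenerateTensor w₁ v₁ w₂ v₂ w₃ v₃
  obtain rfl : y = Z *ᵥ G := hy
  have hobj := sum_sq_sub_mulVec_add_mul_sum_sq hZ (by positivity : 1 + α ≠ 0) G
  have hbest : IsMinOn (fun B => ∑ j, (B j - ((1 + α)⁻¹ • G) j) ^ 2) {B | rank3 B ≤ 2} A := by
    refine isMinOn_iff.mpr fun B hB => ?_
    have h := hmin B hB
    rw [hobj, hobj] at h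
    exact le_of_mul_le_mul_left (le_of_add_le_add_right h) (by positivity)
  have hT : (1 + α)⁻¹ • G ∈ closure {B | rank3 B ≤ 2} :=
    map_mem_closure (continuous_const_smul _) (degenerateTensor_mem_closure _ _ _ _ _ _)
      fun B hB => (rank3_smul_le _ B).trans hB
  have hG : 2 < rank3 G := two_lt_rank3_degenerateTensor h₁ h₂ h₃
  rw [eq_of_isMinOn_of_mem_closure hbest hT, rank3_smul (by positivity)] at hA
  omega
end
end
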